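/- arXiv:1406.1085 — 4 statements merged into one kernel-verified Lean document; each statement's English description precedes it below -/
import Mathlib

section
/- Let H be a k-uniform hypergraph obtained from K_n^k by deleting a set F of r distinct edges. Then the number of simplices of H is at most C(n, k+1) − Σ_{i=0}^{r−1} max(n − k − i, 0). Equivalently, deleting r edges from K_n^k destroys at least Σ_{i=0}^{r−1} (n − k − i) simplices (when n − k ≥ r). -/
/-!
A `(k+1)`-set containing a deleted edge `f` is destroyed. Adding the edges of `F` one at a
time, the `i`-th edge `f` lies in `n - k` sets of size `k + 1`, and each earlier edge `g`
shares at most one of them with `f`, namely `f ∪ g`. So the `i`-th edge destroys at least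
`n - k - i` new simplices.
-/

/-- Edge set of the complete k-uniform hypergraph on `Fin n`. -/
def completeEdges (n k : ℕ) : Finset (Finset (Fin n)) :=
  Finset.univ.filter (fun e => e.card = k)

/-- The simplices of a k-uniform hypergraph with edge set `E`. -/
def simplices (n k : ℕ) (E : Finset (Finset (Fin n))) : Finset (Finset (Fin n)) :=
  Finset.univ.filter (fun S => S.card = k + 1 ∧ ∀ f ∈ Finset.powersetCard k S, f ∈ E)

open Finset

variable {α : Type*} [DecidableEq α]

theorem Finset.eq_union_of_card_eq_succ {k : ℕ} {f g S : Finset α} (hf : #f = k) (hg : #g = k)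
    (hfg : f ≠ g) (hfS : f ⊆ S) (hgS : g ⊆ S) (hS : #S = k + 1) : S = f ∪ g := by
  have hgf : ¬g ⊆ f := fun h => hfg (eq_of_subset_of_card_le h (by omega)).symm
  have hlt : k < #(f ∪ g) := hf ▸ card_lt_card (ssubset_of_subset_of_ne subset_union_left
    fun h => hgf (h ▸ subset_union_right))
  exact (eq_of_subset_of_card_le (union_subset hfS hgS) (by omega)).symm

theorem Finset.sum_range_card_le_card_filter_exists_subset {s : Finset α} {k : ℕ}
    {F : Finset (Finset α)} (hF : F ⊆ s.powersetCard k) :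
    ∑ i ∈ range #F, (#s - k - i) ≤ #((s.powersetCard (k + 1)).filter fun S => ∃ f ∈ F, f ⊆ S) := by
  induction F using Finset.induction_on with
  | empty => simp
  | @insert f F hfF ih =>
    obtain ⟨hfs, hfk⟩ := mem_powersetCard.mp (hF (mem_insert_self f F))
    set D := (s.powersetCard (k + 1)).filter fun S => ∃ g ∈ F, g ⊆ S
    set N := (s.powersetCard (k + 1)).filter (f ⊆ ·)
    have hsplit : ((s.powersetCard (k + 1)).filter fun S => ∃ g ∈ insert f F, g ⊆ S) = D ∪ N := by
      ext S; simp only [D, N, mem_filter, mem_union, exists_mem_insert, and_or_left, or_comm]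
    have hN : #N = #s - k := by
      rw [card_filter_powersetCard_subset f s (k + 1) hfs (by omega), hfk]; simp
    have hND : D ∩ N ⊆ F.image (f ∪ ·) := by
      intro S hS
      simp only [D, N, mem_inter, mem_filter, mem_powersetCard] at hS
      obtain ⟨⟨⟨-, hSk⟩, g, hgF, hgS⟩, -, hfS⟩ := hS
      have hgk : #g = k := (mem_powersetCard.mp (hF (mem_insert_of_mem hgF))).2
      exact mem_image.mpr ⟨g, hgF, (eq_union_of_card_eq_succ hfk hgk
        (fun h => hfF (h ▸ hgF)) hfS hgS hSk).symm⟩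
    have hcard := card_union_add_card_inter D N
    have hDle := card_le_card (subset_union_left : D ⊆ D ∪ N)
    have hinter := (card_le_card hND).trans card_image_le
    rw [card_insert_of_notMem hfF, sum_range_succ, hsplit]
    have hIH := ih ((subset_insert f F).trans hF)
    omega

theorem completeEdges_eq_powersetCard (n k : ℕ) : completeEdges n k = univ.powersetCard k := by
  ext e; simp [completeEdges]

theorem simplices_subset_sdiff_filter_exists_subset {n k : ℕ} {F : Finset (Finset (Fin n))}
    (hF : F ⊆ completeEdges n k) :
    simplices n k (completeEdges n k \ F) ⊆
      univ.powersetCard (k + 1) \ (univ.powersetCard (k + 1)).filter fun S => ∃ f ∈ F, f ⊆ S := by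
  intro S hS
  simp only [simplices, mem_filter, mem_univ, true_and] at hS
  obtain ⟨hSk, hedges⟩ := hS
  simp only [mem_sdiff, mem_filter, mem_powersetCard, subset_univ, true_and, hSk, not_exists,
    not_and]
  intro f hfF hfS
  have hfk : #f = k := (mem_powersetCard.mp (completeEdges_eq_powersetCard n k ▸ hF hfF)).2
  exact (mem_sdiff.mp (hedges f (mem_powersetCard.mpr ⟨hfS, hfk⟩))).2 hfF

theorem stmt5 (n k r : ℕ) (F : Finset (Finset (Fin n))) (hF : F ⊆ completeEdges n k)
    (hr : F.card = r) :
    (simplices n k (completeEdges n k \ F)).card ≤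
      n.choose (k + 1) - ∑ i ∈ Finset.range r, (n - k - i) := by
  subst hr
  have hdestroyed :=
    sum_range_card_le_card_filter_exists_subset (completeEdges_eq_powersetCard n k ▸ hF)
  rw [card_univ, Fintype.card_fin] at hdestroyed
  calc #(simplices n k (completeEdges n k \ F))
      ≤ #(univ.powersetCard (k + 1) \ _) :=
        card_le_card (simplices_subset_sdiff_filter_exists_subset hF)
    _ = n.choose (k + 1) - #((univ.powersetCard (k + 1)).filter fun S => ∃ f ∈ F, f ⊆ S) := by
        rw [card_sdiff_of_subset (filter_subset _ _), card_powersetCard, card_univ,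
          Fintype.card_fin]
    _ ≤ n.choose (k + 1) - ∑ i ∈ range #F, (n - k - i) := Nat.sub_le_sub_left hdestroyed _
end

section
/- Let F be a set of r edges of K_n^k with n ≥ k + r. The number of simplices of K_n^k destroyed by deleting all edges of F equals Σ_{i=0}^{r−1} (n − k − i) if and only if all edges in F share k−1 common vertices (i.e., there is a (k−1)-set contained in every edge of F). -/
open Finset
open scoped FinsetFamily

namespace Finset

variable {α : Type*} [DecidableEq α]

lemma card_lt_card_union_of_ne {e f : Finset α} (hcard : #e = #f) (hne : e ≠ f) :
    #e < #(e ∪ f) := by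
  refine card_lt_card (ssubset_iff_subset_ne.2 ⟨subset_union_left, fun h => hne ?_⟩)
  exact (eq_of_subset_of_card_le (union_eq_left.1 h.symm) hcard.le).symm

lemma erase_subset_of_card_inter {e f : Finset α} {w : α} (hw : w ∈ e) (hwf : w ∉ f)
    (h : #e - 1 ≤ #(f ∩ e)) : e.erase w ⊆ f := by
  have hsub : f ∩ e ⊆ e.erase w := fun x hx =>
    mem_erase.2 ⟨fun hxw => hwf (hxw ▸ (mem_inter.1 hx).1), (mem_inter.1 hx).2⟩
  rw [← eq_of_subset_of_card_le hsub (by rwa [card_erase_of_mem hw])]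
  exact inter_subset_left

lemma card_le_card_sdiff_of_forall_between {G : Finset (Finset α)} {W S : Finset α}
    (hG : ∀ e ∈ G, W ⊆ e ∧ e ⊆ S ∧ #e = #W + 1) : #G ≤ #(S \ W) := by
  calc #G ≤ #((S \ W).powersetCard 1) := by
        refine card_le_card_of_injOn (· \ W) (fun e he => ?_) (fun e he f hf hef => ?_)
        · obtain ⟨hWe, heS, he⟩ := hG e he
          rw [mem_coe, mem_powersetCard, card_sdiff_of_subset hWe, he]
          exact ⟨sdiff_subset_sdiff heS subset_rfl, by omega⟩
        · rw [← union_sdiff_of_subset (hG e he).1, ← union_sdiff_of_subset (hG f hf).1]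
          exact congrArg (W ∪ ·) hef
    _ = #(S \ W) := by simp

section Counting

variable [Fintype α] {k : ℕ} {F : Finset (Finset α)}

lemma card_upShadow_singleton (e : Finset α) : #(∂⁺ {e}) = Fintype.card α - #e := by
  rw [upShadow, sup_singleton, card_image_of_injOn, card_compl]
  intro a ha b _ hab
  exact (insert_inj (by simpa using ha)).1 hab

lemma filter_subset_upShadow_eq (hF : (F : Set (Finset α)).Sized k) {e : Finset α}
    (he : e ∈ F) : {S ∈ ∂⁺ F | e ⊆ S} = ∂⁺ {e} := by
  ext S
  simp only [mem_filter, mem_upShadow_iff_exists_mem_card_add_one, mem_singleton,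
    exists_eq_left]
  constructor
  · rintro ⟨⟨f, hf, -, hS⟩, heS⟩
    exact ⟨heS, by rw [hS, hF hf, hF he]⟩
  · rintro ⟨heS, hS⟩
    exact ⟨⟨e, he, heS, hS⟩, heS⟩

lemma sum_card_filter_subset_upShadow (hF : (F : Set (Finset α)).Sized k) :
    ∑ S ∈ ∂⁺ F, #{e ∈ F | e ⊆ S} = #F * (Fintype.card α - k) := by
  rw [show ∑ S ∈ ∂⁺ F, #{e ∈ F | e ⊆ S} = ∑ e ∈ F, #{S ∈ ∂⁺ F | e ⊆ S} from
    (sum_card_bipartiteAbove_eq_sum_card_bipartiteBelow _).symm]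
  rw [sum_congr rfl fun e he => by
    rw [filter_subset_upShadow_eq hF he, card_upShadow_singleton, hF he]]
  exact sum_const_nat fun _ _ => rfl

lemma filter_pair_subset_upShadow_eq (hF : (F : Set (Finset α)).Sized k) {e f : Finset α}
    (he : e ∈ F) (hf : f ∈ F) (hne : e ≠ f) :
    {S ∈ ∂⁺ F | e ⊆ S ∧ f ⊆ S} = ({e ∪ f} : Finset (Finset α)).filter (#· = k + 1) := by
  ext S
  simp only [mem_filter, mem_singleton]
  constructor
  · rintro ⟨hS, heS, hfS⟩
    have hcard : #S = k + 1 := hF.upShadow hS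
    have hunion := card_lt_card_union_of_ne ((hF he).trans (hF hf).symm) hne
    rw [hF he] at hunion
    exact ⟨(eq_of_subset_of_card_le (union_subset heS hfS) (by omega)).symm, hcard⟩
  · rintro ⟨rfl, hS⟩
    refine ⟨?_, subset_union_left, subset_union_right⟩
    exact mem_upShadow_iff_exists_mem_card_add_one.2 ⟨e, he, subset_union_left, by rw [hS, hF he]⟩

lemma sum_card_offDiag_filter_subset_upShadow (hF : (F : Set (Finset α)).Sized k) :
    ∑ S ∈ ∂⁺ F, #{e ∈ F | e ⊆ S}.offDiag = #{q ∈ F.offDiag | #(q.1 ∪ q.2) = k + 1} := by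
  have hoff (S : Finset α) :
      {e ∈ F | e ⊆ S}.offDiag = {q ∈ F.offDiag | q.1 ⊆ S ∧ q.2 ⊆ S} := by
    ext q
    simp only [mem_offDiag, mem_filter]
    tauto
  simp_rw [hoff]
  rw [show ∑ S ∈ ∂⁺ F, #{q ∈ F.offDiag | q.1 ⊆ S ∧ q.2 ⊆ S} =
      ∑ q ∈ F.offDiag, #{S ∈ ∂⁺ F | q.1 ⊆ S ∧ q.2 ⊆ S} from
    (sum_card_bipartiteAbove_eq_sum_card_bipartiteBelow _).symm, card_filter]
  refine sum_congr rfl fun q hq => ?_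
  obtain ⟨he, hf, hne⟩ := mem_offDiag.1 hq
  rw [filter_pair_subset_upShadow_eq hF he hf hne, filter_singleton]
  split_ifs <;> rfl

lemma two_mul_sub_one_le_mul_sub_one (d : ℕ) : 2 * (d - 1) ≤ d * (d - 1) := by
  obtain hd | hd := le_or_gt d 1
  · interval_cases d <;> rfl
  · exact Nat.mul_le_mul_right _ hd

lemma two_mul_sub_one_eq_mul_sub_one_iff (d : ℕ) : 2 * (d - 1) = d * (d - 1) ↔ d ≤ 2 := by
  refine ⟨fun h => ?_, fun hd => by interval_cases d <;> rfl⟩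
  by_contra hd
  have := Nat.eq_of_mul_eq_mul_right (by omega) h
  omega

theorem two_mul_sum_sub_one_eq_iff (hF : (F : Set (Finset α)).Sized k) :
    2 * ∑ S ∈ ∂⁺ F, (#{e ∈ F | e ⊆ S} - 1) = #F * (#F - 1) ↔
      (∀ S ∈ ∂⁺ F, #{e ∈ F | e ⊆ S} ≤ 2) ∧ ∀ e ∈ F, ∀ f ∈ F, e ≠ f → #(e ∪ f) = k + 1 := by
  have hpairs := sum_card_offDiag_filter_subset_upShadow hF
  simp only [offDiag_card, ← Nat.mul_sub_one] at hpairs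
  have hle₁ := sum_le_sum fun S (_ : S ∈ ∂⁺ F) =>
    two_mul_sub_one_le_mul_sub_one #{e ∈ F | e ⊆ S}
  have hle₂ := card_filter_le F.offDiag fun q => #(q.1 ∪ q.2) = k + 1
  have hdeg := sum_eq_sum_iff_of_le fun S (_ : S ∈ ∂⁺ F) =>
    two_mul_sub_one_le_mul_sub_one #{e ∈ F | e ⊆ S}
  have hadj := card_filter_eq_iff (s := F.offDiag) (p := fun q => #(q.1 ∪ q.2) = k + 1)
  simp only [two_mul_sub_one_eq_mul_sub_one_iff] at hdeg
  simp only [mem_offDiag, and_imp, Prod.forall] at hadj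
  rw [offDiag_card, ← Nat.mul_sub_one] at hle₂ hadj
  rw [mul_sum, ← hdeg]
  constructor
  · intro h
    exact ⟨by omega, fun e he f hf => hadj.1 (by omega) e f he hf⟩
  · rintro ⟨h, hall⟩
    have := hadj.2 fun e f he hf => hall e he f hf
    omega

lemma two_mul_sum_range_sub_add {m r : ℕ} (h : r ≤ m) :
    2 * ∑ i ∈ range r, (m - i) + r * (r - 1) = 2 * (r * m) := by
  rw [← sum_range_id_mul_two, mul_comm _ 2, ← mul_add, ← sum_add_distrib,
    sum_congr rfl fun i hi => Nat.sub_add_cancel (by simp at hi; omega), sum_const, card_range,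
    smul_eq_mul]

theorem card_upShadow_eq_sum_range_iff (hF : (F : Set (Finset α)).Sized k)
    (hr : #F ≤ Fintype.card α - k) :
    #(∂⁺ F) = ∑ i ∈ range #F, (Fintype.card α - k - i) ↔
      (∀ S ∈ ∂⁺ F, #{e ∈ F | e ⊆ S} ≤ 2) ∧ ∀ e ∈ F, ∀ f ∈ F, e ≠ f → #(e ∪ f) = k + 1 := by
  rw [← two_mul_sum_sub_one_eq_iff hF]
  have hD : #(∂⁺ F) + ∑ S ∈ ∂⁺ F, (#{e ∈ F | e ⊆ S} - 1) = #F * (Fintype.card α - k) := by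
    rw [← sum_card_filter_subset_upShadow hF, card_eq_sum_ones, ← sum_add_distrib]
    refine sum_congr rfl fun S hS => ?_
    obtain ⟨e, he, heS⟩ := exists_subset_of_mem_upShadow hS
    have : 0 < #{e ∈ F | e ⊆ S} := card_pos.2 ⟨e, mem_filter.2 ⟨he, heS⟩⟩
    omega
  have := two_mul_sum_range_sub_add hr
  omega

theorem exists_common_subset_of_pairwise_card_union (hkα : k - 1 ≤ Fintype.card α)
    (hF : (F : Set (Finset α)).Sized k) (hdeg : ∀ S ∈ ∂⁺ F, #{e ∈ F | e ⊆ S} ≤ 2)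
    (hadj : ∀ e ∈ F, ∀ f ∈ F, e ≠ f → #(e ∪ f) = k + 1) :
    ∃ W : Finset α, #W = k - 1 ∧ ∀ e ∈ F, W ⊆ e := by
  obtain hsmall | hbig := lt_or_ge #F 2
  · obtain rfl | ⟨e₀, he₀⟩ := F.eq_empty_or_nonempty
    · obtain ⟨W, -, hW⟩ := exists_subset_card_eq (s := (univ : Finset α)) (n := k - 1)
        (by rwa [card_univ])
      exact ⟨W, hW, by simp⟩
    · obtain ⟨W, hWe, hW⟩ := exists_subset_card_eq (s := e₀) (n := k - 1)
        (by rw [hF he₀]; omega)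
      refine ⟨W, hW, fun e he => ?_⟩
      rwa [card_le_one.1 (by omega) e he e₀ he₀]
  have hinter : ∀ e ∈ F, ∀ f ∈ F, e ≠ f → #(e ∩ f) = k - 1 := fun e he f hf hne => by
    have := card_union_add_card_inter e f
    rw [hF he, hF hf, hadj e he f hf hne] at this
    omega
  obtain ⟨e₁, he₁, e₂, he₂, hne⟩ := one_lt_card.1 hbig
  refine ⟨e₁ ∩ e₂, hinter _ he₁ _ he₂ hne, fun f hf => ?_⟩
  by_contra hnot
  obtain ⟨w, hw, hwf⟩ := not_subset.1 hnot
  rw [mem_inter] at hw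
  have hf₁ : f ≠ e₁ := by rintro rfl; exact hwf hw.1
  have hf₂ : f ≠ e₂ := by rintro rfl; exact hwf hw.2
  -- `f` misses `w` but meets `e₁` and `e₂` in `k - 1` points, so `f = (e₁ ∪ e₂).erase w`.
  have hsub : (e₁ ∪ e₂).erase w ⊆ f := by
    rw [erase_union_distrib]
    exact union_subset
      (erase_subset_of_card_inter hw.1 hwf (by rw [hinter f hf e₁ he₁ hf₁, hF he₁]))
      (erase_subset_of_card_inter hw.2 hwf (by rw [hinter f hf e₂ he₂ hf₂, hF he₂]))
  have hfeq : (e₁ ∪ e₂).erase w = f := eq_of_subset_of_card_le hsub (by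
    rw [card_erase_of_mem (mem_union_left _ hw.1), hadj _ he₁ _ he₂ hne, hF hf]; rfl)
  have hS : e₁ ∪ e₂ ∈ ∂⁺ F := mem_upShadow_iff_exists_mem_card_add_one.2
    ⟨e₁, he₁, subset_union_left, by rw [hadj _ he₁ _ he₂ hne, hF he₁]⟩
  have hthree : ({e₁, e₂, f} : Finset (Finset α)) ⊆ {e ∈ F | e ⊆ e₁ ∪ e₂} := by
    simp only [insert_subset_iff, singleton_subset_iff, mem_filter]
    exact ⟨⟨he₁, subset_union_left⟩, ⟨he₂, subset_union_right⟩, hf, hfeq ▸ erase_subset _ _⟩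
  have := (card_le_card hthree).trans (hdeg _ hS)
  rw [card_eq_three.2 ⟨e₁, e₂, f, hne, hf₁.symm, hf₂.symm, rfl⟩] at this
  omega

theorem exists_common_subset_iff (hk : 1 ≤ k) (hkα : k - 1 ≤ Fintype.card α)
    (hF : (F : Set (Finset α)).Sized k) :
    ((∀ S ∈ ∂⁺ F, #{e ∈ F | e ⊆ S} ≤ 2) ∧ ∀ e ∈ F, ∀ f ∈ F, e ≠ f → #(e ∪ f) = k + 1) ↔
      ∃ W : Finset α, #W = k - 1 ∧ ∀ e ∈ F, W ⊆ e := by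
  refine ⟨fun h => exists_common_subset_of_pairwise_card_union hkα hF h.1 h.2, ?_⟩
  rintro ⟨W, hW, hWF⟩
  refine ⟨fun S hS => ?_, fun e he f hf hne => ?_⟩
  · obtain ⟨e, he, heS⟩ := exists_subset_of_mem_upShadow hS
    calc #{e ∈ F | e ⊆ S}
        ≤ #(S \ W) := card_le_card_sdiff_of_forall_between fun f hf => by
          rw [mem_filter] at hf
          exact ⟨hWF f hf.1, hf.2, by rw [hF hf.1, hW]; omega⟩
      _ = 2 := by
          rw [card_sdiff_of_subset ((hWF e he).trans heS), hF.upShadow hS, hW]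
          omega
  · have hunion := card_union_add_card_inter e f
    have hinter := card_le_card (subset_inter (hWF e he) (hWF f hf))
    have hlt := card_lt_card_union_of_ne ((hF he).trans (hF hf).symm) hne
    rw [hF he, hF hf] at hunion
    rw [hF he] at hlt
    omega

end Counting

end Finset

lemma filter_simplices_completeEdges_eq_upShadow {n k : ℕ} {F : Finset (Finset (Fin n))}
    (hF : F ⊆ completeEdges n k) :
    (simplices n k (completeEdges n k)).filter (fun S => ∃ e ∈ F, e ⊆ S) = ∂⁺ F := by
  ext S
  simp only [simplices, completeEdges, mem_filter, mem_univ, true_and, mem_powersetCard,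
    mem_upShadow_iff_exists_mem_card_add_one]
  constructor
  · rintro ⟨⟨hS, -⟩, e, he, heS⟩
    exact ⟨e, he, heS, by rw [hS, (mem_filter.1 (hF he)).2]⟩
  · rintro ⟨e, he, heS, hS⟩
    exact ⟨⟨by rw [hS, (mem_filter.1 (hF he)).2], fun _ hf => hf.2⟩, e, he, heS⟩

theorem stmt6 (n k r : ℕ) (hk : 1 ≤ k) (hn : k + r ≤ n)
    (F : Finset (Finset (Fin n))) (hF : F ⊆ completeEdges n k) (hr : F.card = r) :
    ((simplices n k (completeEdges n k)).filter (fun S => ∃ e ∈ F, e ⊆ S)).card =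
        ∑ i ∈ Finset.range r, (n - k - i) ↔
      ∃ W : Finset (Fin n), W.card = k - 1 ∧ ∀ e ∈ F, W ⊆ e := by
  have hFk : (F : Set (Finset (Fin n))).Sized k := fun e he => (mem_filter.1 (hF he)).2
  have hcount := card_upShadow_eq_sum_range_iff hFk (by rw [Fintype.card_fin]; omega)
  rw [Fintype.card_fin, hr] at hcount
  rw [filter_simplices_completeEdges_eq_upShadow hF, hcount,
    exists_common_subset_iff hk (by rw [Fintype.card_fin]; omega) hFk]
end

section
/- Let F be a set of r edges of K_n^k, with n ≥ k + r, such that all edges of F contain a common (k−1)-set W. Then the edges of F are exactly W ∪ {u_i} for r distinct vertices u_1,...,u_r outside W, and the number of simplices of K_n^k destroyed by deleting F is exactly (n−k) + (n−k−1) + ⋯ + (n−k−r+1). -/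
/-!
Every edge of `F` is `W` together with one further vertex, so `F` is the image of a set `U` of
`r` vertices outside `W`. A `(k+1)`-set is destroyed exactly when it contains `W` and meets `U`;
such sets are `W` plus a pair from the `(n-k+1)`-set `Wᶜ`, so there are
`C(n-k+1, 2) - C(n-k+1-r, 2)` of them, and this difference telescopes to the stated sum.
-/

open Finset

theorem simplices_completeEdges (n k : ℕ) :
    simplices n k (completeEdges n k) = completeEdges n (k + 1) := by
  ext S
  simp +contextual [simplices, completeEdges, mem_powersetCard]

theorem Nat.sum_range_sub_one_sub_add_choose_two {m j : ℕ} (h : j ≤ m) :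
    ∑ i ∈ range j, (m - 1 - i) + (m - j).choose 2 = m.choose 2 := by
  induction j with
  | zero => simp
  | succ j ih =>
    obtain ⟨l, hl, hl'⟩ : ∃ l, m - j = l + 1 ∧ m - (j + 1) = l :=
      ⟨m - j - 1, by omega, by omega⟩
    have hchoose : (l + 1).choose 2 = l + l.choose 2 := by
      simp [Nat.choose_succ_succ']
    rw [sum_range_succ, ← ih (by omega), hl, hl', hchoose]
    omega

section

variable {α : Type*} [DecidableEq α]

theorem exists_eq_image_insert_of_forall_mem [Fintype α] {W : Finset α}
    {F : Finset (Finset α)} (hF : ∀ e ∈ F, W ⊆ e ∧ #W + 1 = #e) :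
    ∃ U : Finset α, #U = #F ∧ Disjoint U W ∧ F = U.image (insert · W) := by
  set U : Finset α := {u ∈ Wᶜ | insert u W ∈ F}
  have hFU : F = U.image (insert · W) := by
    ext e
    simp only [U, mem_image, mem_filter, mem_compl]
    constructor
    · intro he
      obtain ⟨a, ha, rfl⟩ := exists_eq_insert_iff.2 (hF e he)
      exact ⟨a, ⟨ha, he⟩, rfl⟩
    · rintro ⟨u, ⟨-, hu⟩, rfl⟩
      exact hu
  have hinj : Set.InjOn (insert · W) U := fun u hu _ _ huv ↦
    (insert_inj (mem_compl.1 (mem_filter.1 hu).1)).1 huv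
  exact ⟨U, by rw [hFU, card_image_of_injOn hinj],
    disjoint_compl_left.mono_left (filter_subset _ _), hFU⟩

theorem exists_mem_image_insert_subset_iff {W U S : Finset α} :
    (∃ e ∈ U.image (insert · W), e ⊆ S) ↔ W ⊆ S ∧ ¬Disjoint U S := by
  simp only [mem_image, exists_exists_and_eq_and, insert_subset_iff, not_disjoint_iff]
  tauto

variable [Fintype α]

theorem card_filter_superset_subset_card_eq {W X : Finset α} (hWX : W ⊆ X) (j : ℕ) :
    #{S | W ⊆ S ∧ S ⊆ X ∧ #S = #W + j} = (#X - #W).choose j := by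
  rw [← card_sdiff_of_subset hWX, ← card_powersetCard]
  refine card_nbij' (· \ W) (W ∪ ·) ?_ ?_ ?_ ?_
  · intro S hS
    simp only [mem_coe, mem_filter, mem_univ, true_and, mem_powersetCard] at hS ⊢
    obtain ⟨hWS, hSX, hS⟩ := hS
    refine ⟨sdiff_subset_sdiff hSX le_rfl, ?_⟩
    rw [card_sdiff_of_subset hWS]
    omega
  · intro T hT
    simp only [mem_coe, mem_filter, mem_univ, true_and, mem_powersetCard, subset_sdiff] at hT ⊢
    refine ⟨subset_union_left, union_subset hWX hT.1.1, ?_⟩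
    rw [card_union_of_disjoint hT.1.2.symm, hT.2]
  · intro S hS
    simp only [mem_coe, mem_filter, mem_univ, true_and] at hS
    exact union_sdiff_of_subset hS.1
  · intro T hT
    simp only [mem_coe, mem_powersetCard, subset_sdiff] at hT
    exact union_sdiff_cancel_left hT.1.2.symm

theorem card_filter_superset_card_eq_not_disjoint {W U : Finset α} (hUW : Disjoint U W)
    (j : ℕ) :
    #{S | W ⊆ S ∧ #S = #W + j ∧ ¬Disjoint U S} + (Fintype.card α - #W - #U).choose j =
      (Fintype.card α - #W).choose j := by
  have hWU : W ⊆ Uᶜ := by rwa [subset_compl_iff_disjoint_right, disjoint_comm]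
  calc _ = #{S | W ⊆ S ∧ #S = #W + j ∧ ¬Disjoint U S} +
        #{S | W ⊆ S ∧ S ⊆ Uᶜ ∧ #S = #W + j} := by
        rw [card_filter_superset_subset_card_eq hWU, card_compl, Nat.sub_right_comm]
    _ = #{S | W ⊆ S ∧ S ⊆ univ ∧ #S = #W + j} := by
        rw [← card_union_of_disjoint, ← filter_or]
        · congr 1
          ext S
          simp only [mem_filter, mem_univ, true_and, subset_univ, subset_compl_iff_disjoint_left]
          tauto
        · exact disjoint_filter.2 fun S _ hS hS' ↦
            hS.2.2 (subset_compl_iff_disjoint_left.1 hS'.2.1)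
    _ = _ := by rw [card_filter_superset_subset_card_eq (subset_univ W), card_univ]

theorem card_filter_superset_card_add_two_not_disjoint {W U : Finset α} (hUW : Disjoint U W) :
    #{S | W ⊆ S ∧ #S = #W + 2 ∧ ¬Disjoint U S} =
      ∑ i ∈ range #U, (Fintype.card α - #W - 1 - i) := by
  have hU : #U ≤ Fintype.card α - #W := by
    rw [← card_compl]
    exact card_le_card (subset_compl_iff_disjoint_right.2 hUW)
  have hsum := Nat.sum_range_sub_one_sub_add_choose_two hU
  have hcount := card_filter_superset_card_eq_not_disjoint hUW 2
  omega

end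

theorem stmt7_general (n k r : ℕ) (hk : 1 ≤ k)
    (F : Finset (Finset (Fin n))) (hF : F ⊆ completeEdges n k) (hr : F.card = r)
    (W : Finset (Fin n)) (hW : W.card = k - 1) (hWF : ∀ e ∈ F, W ⊆ e) :
    (∃ U : Finset (Fin n), U.card = r ∧ Disjoint U W ∧
        F = U.image (fun u => insert u W)) ∧
    ((simplices n k (completeEdges n k)).filter (fun S => ∃ e ∈ F, e ⊆ S)).card =
      ∑ i ∈ Finset.range r, (n - k - i) := by
  have hedge : ∀ e ∈ F, W ⊆ e ∧ #W + 1 = #e := fun e he ↦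
    ⟨hWF e he, by rw [hW, (mem_filter.1 (hF he)).2]; omega⟩
  obtain ⟨U, hUF, hUW, hFU⟩ := exists_eq_image_insert_of_forall_mem hedge
  refine ⟨⟨U, hUF.trans hr, hUW, hFU⟩, ?_⟩
  have hdestroyed : (simplices n k (completeEdges n k)).filter (fun S => ∃ e ∈ F, e ⊆ S) =
      ({S | W ⊆ S ∧ #S = #W + 2 ∧ ¬Disjoint U S} : Finset _) := by
    rw [simplices_completeEdges]
    ext S
    simp only [completeEdges, mem_filter, mem_univ, true_and, hFU,
      exists_mem_image_insert_subset_iff, show #W + 2 = k + 1 by omega]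
    tauto
  rw [hdestroyed, card_filter_superset_card_add_two_not_disjoint hUW, hUF, hr, Fintype.card_fin]
  exact sum_congr rfl fun i _ ↦ by omega

theorem stmt7 (n k r : ℕ) (hk : 1 ≤ k) (hn : k + r ≤ n)
    (F : Finset (Finset (Fin n))) (hF : F ⊆ completeEdges n k) (hr : F.card = r)
    (W : Finset (Fin n)) (hW : W.card = k - 1) (hWF : ∀ e ∈ F, W ⊆ e) :
    (∃ U : Finset (Fin n), U.card = r ∧ Disjoint U W ∧
        F = U.image (fun u => insert u W)) ∧
    ((simplices n k (completeEdges n k)).filter (fun S => ∃ e ∈ F, e ⊆ S)).card =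
      ∑ i ∈ Finset.range r, (n - k - i) :=
  stmt7_general n k r hk F hF hr W hW hWF
end

section
/- Let H be a k-uniform hypergraph on vertex set V₁ ∪ V₂ (disjoint, |V₁| = n₁ even) satisfying: (a) every edge has at most one vertex in V₁, and (b) every (k−1)-subset of V₂ has 0, n₁/2, or n₁ neighbors in V₁. Let G be the switched hypergraph (for each (k−1)-set U ⊆ V₂ with n₁/2 neighbors in V₁, replace those neighbors by the other n₁/2 vertices of V₁). Let P be the block-diagonal matrix with blocks (2/n₁)J − I (on V₁) and I (on V₂). Then for the adjacency tensors, A_G = P · A_H · Pᵀ, where (P·A·Pᵀ)_{i1...ik} = Σ_{j1,...,jk} a_{j1...jk} p_{i1 j1} ⋯ p_{ik jk}. -/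
/-- Adjacency tensor of a k-uniform hypergraph on `Fin n`. -/
noncomputable def adjTensor {n : ℕ} (k : ℕ) (H : Finset (Finset (Fin n))) :
    (Fin k → Fin n) → ℝ :=
  fun i => if Function.Injective i ∧ Finset.univ.image i ∈ H
    then 1 / (Nat.factorial (k - 1) : ℝ) else 0

/-- The triple product P·A·Pᵀ of an order-k tensor with an n×n matrix. -/
noncomputable def tensorConj {n k : ℕ} (P : Matrix (Fin n) (Fin n) ℝ)
    (A : (Fin k → Fin n) → ℝ) : (Fin k → Fin n) → ℝ :=
  fun i => ∑ j : Fin k → Fin n, A j * ∏ t : Fin k, P (i t) (j t)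

/-- Block diagonal matrix with block `(2/n₁)J − I` on `V₁` and identity on the complement. -/
noncomputable def switchMatrix {n : ℕ} (V₁ : Finset (Fin n)) : Matrix (Fin n) (Fin n) ℝ :=
  fun i j =>
    if i ∈ V₁ ∧ j ∈ V₁ then 2 / (V₁.card : ℝ) - (if i = j then 1 else 0)
    else if i ∉ V₁ ∧ j ∉ V₁ ∧ i = j then 1 else 0

open Classical in
/-- The GM-type switched hypergraph. -/
noncomputable def switched {n : ℕ} (k : ℕ) (V₁ V₂ : Finset (Fin n))
    (H : Finset (Finset (Fin n))) : Finset (Finset (Fin n)) :=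
  H.filter (fun e => e ⊆ V₂) ∪
    Finset.univ.filter (fun e => ∃ u ∈ V₁, ∃ U : Finset (Fin n), U ⊆ V₂ ∧
      U.card = k - 1 ∧ e = insert u U ∧
      (if (V₁.filter (fun w => insert w U ∈ H)).card = V₁.card / 2
        then insert u U ∉ H else insert u U ∈ H))

/-! Rows of `P` indexed outside `V₁` are unit vectors, so at an injective tuple `i` with a
single entry `u = i s` in `V₁` the sum defining `(P·A_H·Pᵀ)_i` collapses to one over the value
`w ∈ V₁` of that entry:
`∑_{w ∈ V₁} a(i[s ↦ w]) (2/n₁ - δ_{uw}) = (2d/n₁ - [u ∪ U ∈ H]) / (k-1)!`,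
where `U` is the set of the other entries and `d` its number of neighbours in `V₁`.
For `d ∈ {0, n₁/2, n₁}` the bracket `2d/n₁ - [u ∪ U ∈ H]` is exactly `[u ∪ U ∈ G]`.
At tuples with two entries in `V₁` both tensors vanish by (a), which `G` inherits, and at
tuples inside `V₂` nothing changes. -/

open Finset

section SwitchMatrix

variable {n : ℕ} {V₁ : Finset (Fin n)} {a b : Fin n}

lemma switchMatrix_of_notMem (ha : a ∉ V₁) : switchMatrix V₁ a b = if a = b then 1 else 0 := by
  by_cases hab : a = b
  · subst hab; simp [switchMatrix, ha]
  · simp [switchMatrix, ha, hab]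

lemma switchMatrix_of_mem_of_notMem (ha : a ∈ V₁) (hb : b ∉ V₁) : switchMatrix V₁ a b = 0 := by
  simp [switchMatrix, ha, hb]

lemma switchMatrix_of_mem_of_mem (ha : a ∈ V₁) (hb : b ∈ V₁) :
    switchMatrix V₁ a b = 2 / (#V₁ : ℝ) - if a = b then 1 else 0 := by
  simp [switchMatrix, ha, hb]

lemma sum_mul_switchMatrix (ha : a ∈ V₁) (f : Fin n → ℝ) :
    ∑ w, f w * switchMatrix V₁ a w = 2 / (#V₁ : ℝ) * ∑ w ∈ V₁, f w - f a := by
  rw [← sum_subset (subset_univ V₁) fun w _ hw => by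
    rw [switchMatrix_of_mem_of_notMem ha hw, mul_zero]]
  rw [sum_congr rfl fun w hw => by rw [switchMatrix_of_mem_of_mem ha hw], mul_sum]
  simp [mul_sub, sum_sub_distrib, sum_ite_eq, ha, mul_comm]

end SwitchMatrix

section TensorConj

variable {n k : ℕ} {P : Matrix (Fin n) (Fin n) ℝ} {A : (Fin k → Fin n) → ℝ} {i : Fin k → Fin n}

lemma tensorConj_apply_of_forall_row_eq_single
    (hP : ∀ t b, P (i t) b = if i t = b then 1 else 0) : tensorConj P A i = A i := by
  rw [tensorConj, sum_eq_single i]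
  · simp [hP]
  · intro j _ hji
    obtain ⟨t, ht⟩ := Function.ne_iff.mp hji
    rw [prod_eq_zero (mem_univ t) (by rw [hP, if_neg (Ne.symm ht)]), mul_zero]
  · exact fun h => (h (mem_univ i)).elim

lemma tensorConj_apply_eq_sum_update {s : Fin k}
    (hP : ∀ t ≠ s, ∀ b, P (i t) b = if i t = b then 1 else 0) :
    tensorConj P A i = ∑ w, A (Function.update i s w) * P (i s) w := by
  rw [tensorConj, ← sum_subset (subset_univ (univ.image (Function.update i s)))]
  · rw [sum_image fun w _ w' _ h => Function.update_injective i s h]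
    refine sum_congr rfl fun w _ => ?_
    rw [Fintype.prod_eq_single s fun t ht => by simp [Function.update_of_ne ht, hP t ht],
      Function.update_self]
  · intro j _ hj
    obtain ⟨t, hts, hjt⟩ : ∃ t ≠ s, j t ≠ i t := by
      by_contra! h
      refine hj (mem_image.mpr ⟨j s, mem_univ _, funext fun t => ?_⟩)
      rcases eq_or_ne t s with rfl | hts
      · exact Function.update_self ..
      · rw [Function.update_of_ne hts, h t hts]
    rw [prod_eq_zero (mem_univ t) (by rw [hP t hts, if_neg (Ne.symm hjt)]), mul_zero]

end TensorConj

section Hypergraph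

variable {n k : ℕ} {V₁ V₂ : Finset (Fin n)} {H : Finset (Finset (Fin n))}

lemma adjTensor_apply (i : Fin k → Fin n) :
    adjTensor k H i =
      if #(univ.image i) = k ∧ univ.image i ∈ H then 1 / ((k - 1).factorial : ℝ) else 0 := by
  have : Function.Injective i ↔ #(univ.image i) = k := by
    rw [← Set.injOn_univ, ← coe_univ, ← card_image_iff, card_univ, Fintype.card_fin]
  simp only [adjTensor, this]

lemma adjTensor_eq_zero_of_two_mem (hH : ∀ e ∈ H, #(e ∩ V₁) ≤ 1) {j : Fin k → Fin n}
    {t₁ t₂ : Fin k} (hne : t₁ ≠ t₂) (h₁ : j t₁ ∈ V₁) (h₂ : j t₂ ∈ V₁) : adjTensor k H j = 0 := by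
  rw [adjTensor, if_neg]
  rintro ⟨hj, hmem⟩
  have : 1 < #(univ.image j ∩ V₁) := one_lt_card.mpr
    ⟨j t₁, by simp [h₁], j t₂, by simp [h₂], hj.ne hne⟩
  exact absurd (hH _ hmem) (by omega)

lemma tensorConj_switchMatrix_eq_zero_of_two_mem (hH : ∀ e ∈ H, #(e ∩ V₁) ≤ 1)
    {i : Fin k → Fin n} {t₁ t₂ : Fin k} (hne : t₁ ≠ t₂) (h₁ : i t₁ ∈ V₁) (h₂ : i t₂ ∈ V₁) :
    tensorConj (switchMatrix V₁) (adjTensor k H) i = 0 := by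
  refine sum_eq_zero fun j _ => ?_
  by_cases hj₁ : j t₁ ∈ V₁
  · by_cases hj₂ : j t₂ ∈ V₁
    · rw [adjTensor_eq_zero_of_two_mem hH hne hj₁ hj₂, zero_mul]
    · exact mul_eq_zero_of_right _
        (prod_eq_zero (mem_univ t₂) (switchMatrix_of_mem_of_notMem h₂ hj₂))
  · exact mul_eq_zero_of_right _
      (prod_eq_zero (mem_univ t₁) (switchMatrix_of_mem_of_notMem h₁ hj₁))

lemma insert_inter_eq_singleton (hdisj : Disjoint V₁ V₂) {u : Fin n} {U : Finset (Fin n)}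
    (hu : u ∈ V₁) (hU : U ⊆ V₂) : insert u U ∩ V₁ = {u} := by
  rw [insert_inter_of_mem hu,
    disjoint_iff_inter_eq_empty.mp (disjoint_of_subset_left hU hdisj.symm)]
  rfl

lemma insert_inter_eq_self (hdisj : Disjoint V₁ V₂) {u : Fin n} {U : Finset (Fin n)}
    (hu : u ∈ V₁) (hU : U ⊆ V₂) : insert u U ∩ V₂ = U := by
  rw [insert_inter_of_notMem (disjoint_left.mp hdisj hu), inter_eq_left.mpr hU]

lemma card_inter_le_one_of_mem_switched (hdisj : Disjoint V₁ V₂) {e : Finset (Fin n)}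
    (he : e ∈ switched k V₁ V₂ H) : #(e ∩ V₁) ≤ 1 := by
  rcases mem_union.mp he with he | he
  · rw [disjoint_iff_inter_eq_empty.mp (disjoint_of_subset_left (mem_filter.mp he).2 hdisj.symm),
      card_empty]
    exact zero_le_one
  · obtain ⟨-, u, hu, U, hU, -, rfl, -⟩ := mem_filter.mp he
    rw [insert_inter_eq_singleton hdisj hu hU, card_singleton]

lemma mem_switched_of_subset (hdisj : Disjoint V₁ V₂) {e : Finset (Fin n)} (he : e ⊆ V₂) :
    e ∈ switched k V₁ V₂ H ↔ e ∈ H := by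
  refine ⟨fun h => ?_, fun h => mem_union_left _ (mem_filter.mpr ⟨h, he⟩)⟩
  rcases mem_union.mp h with h | h
  · exact (mem_filter.mp h).1
  · obtain ⟨-, u, hu, U, -, -, rfl, -⟩ := mem_filter.mp h
    exact absurd (he (mem_insert_self u U)) (disjoint_left.mp hdisj hu)

lemma insert_mem_switched_iff (hdisj : Disjoint V₁ V₂) {u : Fin n} {U : Finset (Fin n)}
    (hu : u ∈ V₁) (hU : U ⊆ V₂) (hcard : #U = k - 1) :
    insert u U ∈ switched k V₁ V₂ H ↔
      if #(V₁.filter fun w => insert w U ∈ H) = #V₁ / 2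
        then insert u U ∉ H else insert u U ∈ H := by
  classical
  refine ⟨fun h => ?_, fun h => mem_union_right _ (mem_filter.mpr
    ⟨mem_univ _, u, hu, U, hU, hcard, rfl, by convert h⟩)⟩
  rcases mem_union.mp h with h | h
  · exact absurd ((mem_filter.mp h).2 (mem_insert_self u U)) (disjoint_left.mp hdisj hu)
  · obtain ⟨-, u', hu', U', hU', -, heq, hcond⟩ := mem_filter.mp h
    obtain rfl : u' = u := singleton_injective <| by
      rw [← insert_inter_eq_singleton hdisj hu' hU', ← heq, insert_inter_eq_singleton hdisj hu hU]
    obtain rfl : U' = U := by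
      rw [← insert_inter_eq_self hdisj hu' hU', ← heq, insert_inter_eq_self hdisj hu hU]
    convert hcond

end Hypergraph

section Switching

variable {n k : ℕ} {V₁ V₂ : Finset (Fin n)} {H : Finset (Finset (Fin n))}

lemma ite_insert_mem_switched (hdisj : Disjoint V₁ V₂) (heven : Even #V₁) {u : Fin n}
    {U : Finset (Fin n)} (hu : u ∈ V₁) (hU : U ⊆ V₂) (hcard : #U = k - 1)
    (hd : #(V₁.filter fun w => insert w U ∈ H) = 0 ∨
      #(V₁.filter fun w => insert w U ∈ H) = #V₁ / 2 ∨
      #(V₁.filter fun w => insert w U ∈ H) = #V₁) :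
    (if insert u U ∈ switched k V₁ V₂ H then 1 else 0 : ℝ) =
      2 / (#V₁ : ℝ) * #(V₁.filter fun w => insert w U ∈ H) -
        if insert u U ∈ H then 1 else 0 := by
  have hpos : 0 < #V₁ := card_pos.mpr ⟨u, hu⟩
  have hhalf : 2 * (#V₁ / 2) = #V₁ := Nat.two_mul_div_two_of_even heven
  have hN : (#V₁ : ℝ) ≠ 0 := by positivity
  have hG := insert_mem_switched_iff (H := H) hdisj hu hU hcard
  rcases hd with hzero | hd | hall
  · have huH : insert u U ∉ H := fun h => (card_pos.mpr ⟨u, mem_filter.mpr ⟨hu, h⟩⟩).ne' hzero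
    rw [hzero, if_neg (by omega)] at hG
    simp [hG, huH, hzero]
  · rw [hd, if_pos rfl] at hG
    have : 2 / (#V₁ : ℝ) * ((#V₁ / 2 : ℕ) : ℝ) = 1 := by
      rw [div_mul_eq_mul_div, ← Nat.cast_ofNat, ← Nat.cast_mul, hhalf, div_self hN]
    by_cases huH : insert u U ∈ H <;> simp [huH, hG, hd, this]
  · have hfilter : V₁.filter (fun w => insert w U ∈ H) = V₁ :=
      eq_of_subset_of_card_le (filter_subset _ _) hall.ge
    have huH : insert u U ∈ H := (mem_filter.mp (hfilter.symm ▸ hu : u ∈ _)).2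
    rw [hall, if_neg (by omega)] at hG
    rw [hall, div_mul_cancel₀ _ hN]
    norm_num [hG.mpr huH, huH]

lemma adjTensor_switched_apply_of_forall_notMem (hdisj : Disjoint V₁ V₂)
    (hcover : V₁ ∪ V₂ = univ) {i : Fin k → Fin n} (hi : ∀ t, i t ∉ V₁) :
    adjTensor k (switched k V₁ V₂ H) i = tensorConj (switchMatrix V₁) (adjTensor k H) i := by
  have himage : univ.image i ⊆ V₂ := fun _ hx => by
    obtain ⟨t, -, rfl⟩ := mem_image.mp hx
    exact (mem_union.mp (hcover ▸ mem_univ (i t))).resolve_left (hi t)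
  rw [tensorConj_apply_of_forall_row_eq_single fun t _ => switchMatrix_of_notMem (hi t)]
  simp only [adjTensor, mem_switched_of_subset hdisj himage]

lemma adjTensor_switched_apply_of_unique_mem (hdisj : Disjoint V₁ V₂)
    (hcover : V₁ ∪ V₂ = univ) (heven : Even #V₁)
    (hb : ∀ U ⊆ V₂, #U = k - 1 →
      #(V₁.filter fun w => insert w U ∈ H) = 0 ∨
      #(V₁.filter fun w => insert w U ∈ H) = #V₁ / 2 ∨
      #(V₁.filter fun w => insert w U ∈ H) = #V₁)
    {i : Fin k → Fin n} {s : Fin k} (hs : i s ∈ V₁) (hother : ∀ t ≠ s, i t ∉ V₁) :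
    adjTensor k (switched k V₁ V₂ H) i = tensorConj (switchMatrix V₁) (adjTensor k H) i := by
  set U := (univ.erase s).image i
  have hUV : U ⊆ V₂ := fun _ hx => by
    obtain ⟨t, ht, rfl⟩ := mem_image.mp hx
    exact (mem_union.mp (hcover ▸ mem_univ (i t))).resolve_left (hother t (ne_of_mem_erase ht))
  have hA : ∀ (K : Finset (Finset (Fin n))), ∀ w ∈ V₁, adjTensor k K (Function.update i s w) =
      if #U + 1 = k then (if insert w U ∈ K then 1 else 0) * (1 / ((k - 1).factorial : ℝ))
      else 0 := by
    intro K w hw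
    have himage : univ.image (Function.update i s w) = insert w U := by
      rw [← insert_erase (mem_univ s), image_insert, Function.update_self]
      exact congrArg _ (image_congr fun t ht => Function.update_of_ne (ne_of_mem_erase ht) _ _)
    rw [adjTensor_apply, himage, card_insert_of_notMem fun h => disjoint_left.mp hdisj hw (hUV h)]
    split_ifs <;> simp_all
  rw [tensorConj_apply_eq_sum_update fun t ht _ => switchMatrix_of_notMem (hother t ht),
    sum_mul_switchMatrix hs, sum_congr rfl (hA H), hA _ _ hs]
  conv_lhs => rw [← Function.update_eq_self s i, hA _ _ hs]
  by_cases hk : #U + 1 = k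
  · simp only [if_pos hk]
    rw [← sum_mul, sum_boole, ite_insert_mem_switched hdisj heven hs hUV (by omega)
      (hb U hUV (by omega))]
    ring
  · simp [hk]

end Switching

theorem stmt12_general {n k : ℕ} (V₁ V₂ : Finset (Fin n))
    (hdisj : Disjoint V₁ V₂) (hcover : V₁ ∪ V₂ = Finset.univ) (heven : Even V₁.card)
    (H : Finset (Finset (Fin n)))
    (ha : ∀ e ∈ H, (e ∩ V₁).card ≤ 1)
    (hb : ∀ U ⊆ V₂, U.card = k - 1 →
      (V₁.filter (fun w => insert w U ∈ H)).card = 0 ∨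
      (V₁.filter (fun w => insert w U ∈ H)).card = V₁.card / 2 ∨
      (V₁.filter (fun w => insert w U ∈ H)).card = V₁.card) :
    adjTensor k (switched k V₁ V₂ H) = tensorConj (switchMatrix V₁) (adjTensor k H) := by
  funext i
  by_cases htwo : ∃ t₁ t₂, t₁ ≠ t₂ ∧ i t₁ ∈ V₁ ∧ i t₂ ∈ V₁
  · obtain ⟨t₁, t₂, hne, h₁, h₂⟩ := htwo
    rw [tensorConj_switchMatrix_eq_zero_of_two_mem ha hne h₁ h₂,
      adjTensor_eq_zero_of_two_mem (fun _ => card_inter_le_one_of_mem_switched hdisj) hne h₁ h₂]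
  · by_cases hone : ∃ s, i s ∈ V₁
    · obtain ⟨s, hs⟩ := hone
      exact adjTensor_switched_apply_of_unique_mem hdisj hcover heven hb hs
        fun t hts ht => htwo ⟨t, s, hts, ht, hs⟩
    · exact adjTensor_switched_apply_of_forall_notMem hdisj hcover fun t ht => hone ⟨t, ht⟩

theorem stmt12 {n k : ℕ} (hk : 1 ≤ k) (V₁ V₂ : Finset (Fin n))
    (hdisj : Disjoint V₁ V₂) (hcover : V₁ ∪ V₂ = Finset.univ) (heven : Even V₁.card)
    (H : Finset (Finset (Fin n))) (huni : ∀ e ∈ H, e.card = k)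
    (ha : ∀ e ∈ H, (e ∩ V₁).card ≤ 1)
    (hb : ∀ U ⊆ V₂, U.card = k - 1 →
      (V₁.filter (fun w => insert w U ∈ H)).card = 0 ∨
      (V₁.filter (fun w => insert w U ∈ H)).card = V₁.card / 2 ∨
      (V₁.filter (fun w => insert w U ∈ H)).card = V₁.card) :
    adjTensor k (switched k V₁ V₂ H) = tensorConj (switchMatrix V₁) (adjTensor k H) :=
  stmt12_general V₁ V₂ hdisj hcover heven H ha hb
end
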